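/- For every positive integer a, the graph induced by the internal vertices {v_1, …, v_6} ∪ {v′_1, …, v′_14} of the a-Doubler gadget (with all arcs among these vertices, including the identification arcs v_5 → v′_4 and v_4 → v′_9) admits a path decomposition of width at most 5 whose first bag contains {v_2, v_3} and whose last bag contains {v′_13, v′_14}. -/
import Mathlib


/-- Vertices of the `a`-Doubler gadget: `0,…,5 = v₁,…,v₆` (the `a`-Switch part),
`6,…,19 = v′₁,…,v′₁₄` (the Doubling `a`-Switch part, `v′ₖ = 5 + k`),
`20 = s₁`, `21 = t₂`, `22 = s₂`, `23 = t₁`, `24 = e_L`, `25 = e_R`,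
`26 = o_B`, `27 = o_T`. -/
abbrev DoublerV := Fin 28

/-- Arc capacities of the `a`-Doubler gadget (capacity `0` = no arc). -/
def doublerCap (a : ℕ) (u v : DoublerV) : ℕ :=
  if (u, v) ∈ ([(24, 1), (25, 2), (20, 0), (0, 1), (0, 2), (1, 3), (2, 4),
      (3, 5), (4, 5), (5, 21),
      (4, 9), (3, 14),
      (9, 10), (10, 11), (11, 12), (12, 13), (13, 23),
      (14, 15), (15, 16), (16, 17), (17, 13),
      (7, 9), (7, 11), (8, 14), (8, 16),
      (10, 18), (12, 18), (15, 19), (17, 19)] :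
      List (DoublerV × DoublerV)) then a
  else if (u, v) ∈ ([(22, 6), (6, 7), (6, 8), (18, 26), (19, 27)] :
      List (DoublerV × DoublerV)) then 2 * a
  else 0

/-- A path decomposition of the directed graph on `V` with arc relation `Adj`,
with bags `X 0, …, X r`. -/
def IsPathDecomp {V : Type*} (Adj : V → V → Prop) {r : ℕ}
    (X : Fin (r + 1) → Finset V) : Prop :=
  (∀ v, ∃ i, v ∈ X i) ∧
  (∀ u v, Adj u v → ∃ i, u ∈ X i ∧ v ∈ X i) ∧
  (∀ v (i j k : Fin (r + 1)), i ≤ j → j ≤ k → v ∈ X i → v ∈ X k → v ∈ X j)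

def dbags : Fin 12 → Finset (Fin 20)
| 0 => {0,1,2}
| 1 => {1,2,3,4}
| 2 => {3,4,5}
| 3 => {3,4,6,7,8}
| 4 => {3,4,7,8,9}
| 5 => {3,7,8,9,10,11}
| 6 => {3,8,10,11,12,18}
| 7 => {3,8,12,13,18}
| 8 => {3,8,13,14,18}
| 9 => {8,13,14,15,18,19}
| 10 => {8,13,15,16,18,19}
| 11 => {13,16,17,18,19}

lemma dcov : ∀ u v : Fin 20,
    ((Fin.castLE (by omega) u : DoublerV), (Fin.castLE (by omega) v : DoublerV)) ∈
      ([(24, 1), (25, 2), (20, 0), (0, 1), (0, 2), (1, 3), (2, 4),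
      (3, 5), (4, 5), (5, 21),
      (4, 9), (3, 14),
      (9, 10), (10, 11), (11, 12), (12, 13), (13, 23),
      (14, 15), (15, 16), (16, 17), (17, 13),
      (7, 9), (7, 11), (8, 14), (8, 16),
      (10, 18), (12, 18), (15, 19), (17, 19)] : List (DoublerV × DoublerV)) ++
      ([(22, 6), (6, 7), (6, 8), (18, 26), (19, 27)] : List (DoublerV × DoublerV)) →
    ∃ i, u ∈ dbags i ∧ v ∈ dbags i := by decide

lemma dall : ∀ v : Fin 20, ∃ i, v ∈ dbags i := by decide

lemma dint : ∀ (v : Fin 20) (i j k : Fin 12), i ≤ j → j ≤ k →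
    v ∈ dbags i → v ∈ dbags k → v ∈ dbags j := by decide

lemma dcard : ∀ i, (dbags i).card ≤ 6 := by decide

/-- Lemma 3.17: the internal part of the `a`-Doubler gadget (on the 20 internal
vertices) has a path decomposition of width 5 with `v₂, v₃` in the first bag
and `v′₁₃, v′₁₄` in the last bag. -/
theorem doubler_gadget_pathwidth (a : ℕ) (ha : 0 < a) :
    ∃ (r : ℕ) (X : Fin (r + 1) → Finset (Fin 20)),
      IsPathDecomp
        (fun u v => 0 < doublerCap a (Fin.castLE (by omega) u) (Fin.castLE (by omega) v)) X ∧
      (∀ i, (X i).card ≤ 5 + 1) ∧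
      (1 : Fin 20) ∈ X 0 ∧ (2 : Fin 20) ∈ X 0 ∧
      (18 : Fin 20) ∈ X (Fin.last r) ∧ (19 : Fin 20) ∈ X (Fin.last r) := by
  refine ⟨11, dbags, ⟨dall, ?_, dint⟩, dcard, by decide, by decide, by decide, by decide⟩
  intro u v h
  apply dcov u v
  unfold doublerCap at h
  split_ifs at h with h1 h2
  · exact List.mem_append_left _ h1
  · exact List.mem_append_right _ h2
  · exact absurd h (by simp)
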